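/- arXiv:2404.03211 — 4 statements merged into one kernel-verified Lean document; each statement's English description precedes it below -/
import Mathlib

section
/- For real sequences a_k = 1/(k+1)^{τ1} and λ_k = 1/(k+1)^{τ2} with 0.1 < τ2 < 0.5 < τ1 < 1, τ1 + τ2 < 1, and 3τ2 < τ1, the partial sums satisfy ∑_{i=1}^{k} a_i^2 ∏_{j=i+1}^{k} (1 - a_j λ_j) = O((k+1)^{τ2-τ1} ln(k+1)) as k → ∞. -/
open Finset Filter

private lemma one_le_csucc (m : ℕ) : (1:ℝ) ≤ (m:ℝ) + 1 := by
  exact_mod_cast Nat.succ_le_succ (Nat.zero_le m)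

private lemma factor_nonneg {τ1 τ2 : ℝ} (hτ1 : 0 ≤ τ1) (hτ2 : 0 ≤ τ2) (j : ℕ) :
    0 ≤ 1 - ((j:ℝ) + 1) ^ (-τ1) * ((j:ℝ) + 1) ^ (-τ2) := by
  have hj1 : ((j:ℝ) + 1) ^ (-τ1) ≤ 1 :=
    Real.rpow_le_one_of_one_le_of_nonpos (one_le_csucc j) (by linarith)
  have hj2 : ((j:ℝ) + 1) ^ (-τ2) ≤ 1 :=
    Real.rpow_le_one_of_one_le_of_nonpos (one_le_csucc j) (by linarith)
  have hj3 : (0:ℝ) ≤ ((j:ℝ) + 1) ^ (-τ1) := Real.rpow_nonneg (by positivity) _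
  have hj4 : (0:ℝ) ≤ ((j:ℝ) + 1) ^ (-τ2) := Real.rpow_nonneg (by positivity) _
  nlinarith

private lemma term_le_one {τ1 τ2 : ℝ} (hτ1 : 0 ≤ τ1) (hτ2 : 0 ≤ τ2) (K i : ℕ) :
    ((i + 1 : ℝ) ^ (-τ1)) ^ 2 *
        ∏ j ∈ Finset.Icc (i + 1) K,
          (1 - (j + 1 : ℝ) ^ (-τ1) * (j + 1 : ℝ) ^ (-τ2)) ≤ 1 := by
  have ha1 : ((i:ℝ) + 1) ^ (-τ1) ≤ 1 :=
    Real.rpow_le_one_of_one_le_of_nonpos (one_le_csucc i) (by linarith)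
  have ha0 : (0:ℝ) ≤ ((i:ℝ) + 1) ^ (-τ1) := Real.rpow_nonneg (by positivity) _
  have hP0 : (0:ℝ) ≤ ∏ j ∈ Finset.Icc (i + 1) K,
      (1 - ((j:ℝ) + 1) ^ (-τ1) * ((j:ℝ) + 1) ^ (-τ2)) :=
    Finset.prod_nonneg fun j _ => factor_nonneg hτ1 hτ2 j
  have hP1 : (∏ j ∈ Finset.Icc (i + 1) K,
      (1 - ((j:ℝ) + 1) ^ (-τ1) * ((j:ℝ) + 1) ^ (-τ2))) ≤ 1 := by
    refine Finset.prod_le_one (fun j _ => factor_nonneg hτ1 hτ2 j) ?_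
    intro j _
    have hj3 : (0:ℝ) ≤ ((j:ℝ) + 1) ^ (-τ1) := Real.rpow_nonneg (by positivity) _
    have hj4 : (0:ℝ) ≤ ((j:ℝ) + 1) ^ (-τ2) := Real.rpow_nonneg (by positivity) _
    nlinarith
  nlinarith

private lemma two_rpow_quarter {τ1 : ℝ} (h4 : τ1 ≤ 1) : (1/4 : ℝ) ≤ (2:ℝ) ^ (-(2 * τ1)) := by
  have h22 : ((2:ℝ)) ^ (-2 : ℝ) = 1/4 := by
    rw [show (-2:ℝ) = -((2:ℕ):ℝ) by norm_num, Real.rpow_neg (by norm_num), Real.rpow_natCast]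
    norm_num
  calc (1/4 : ℝ) = (2:ℝ) ^ (-2:ℝ) := h22.symm
    _ ≤ (2:ℝ) ^ (-(2 * τ1)) :=
        Real.rpow_le_rpow_of_exponent_le (by norm_num) (by linarith)

private noncomputable def Ssum (τ1 τ2 : ℝ) (k : ℕ) : ℝ :=
  ∑ i ∈ Finset.Icc 1 k,
      ((i + 1 : ℝ) ^ (-τ1)) ^ 2 *
        ∏ j ∈ Finset.Icc (i + 1) k,
          (1 - (j + 1 : ℝ) ^ (-τ1) * (j + 1 : ℝ) ^ (-τ2))

private lemma Ssum_rec (τ1 τ2 : ℝ) (k : ℕ) :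
    Ssum τ1 τ2 (k + 1) =
    (1 - ((k : ℝ) + 2) ^ (-τ1) * ((k : ℝ) + 2) ^ (-τ2)) * Ssum τ1 τ2 k
      + (((k : ℝ) + 2) ^ (-τ1)) ^ 2 := by
  unfold Ssum
  rw [Finset.sum_Icc_succ_top (by omega : 1 ≤ k + 1)]
  rw [Finset.Icc_eq_empty (by omega : ¬ (k + 1 + 1 ≤ k + 1)), Finset.prod_empty]
  rw [Finset.mul_sum]
  have h1 : ∀ i ∈ Finset.Icc 1 k,
      ((i + 1 : ℝ) ^ (-τ1)) ^ 2 *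
        ∏ j ∈ Finset.Icc (i + 1) (k + 1),
          (1 - (j + 1 : ℝ) ^ (-τ1) * (j + 1 : ℝ) ^ (-τ2)) =
      (1 - ((k : ℝ) + 2) ^ (-τ1) * ((k : ℝ) + 2) ^ (-τ2)) *
        (((i + 1 : ℝ) ^ (-τ1)) ^ 2 *
          ∏ j ∈ Finset.Icc (i + 1) k,
            (1 - (j + 1 : ℝ) ^ (-τ1) * (j + 1 : ℝ) ^ (-τ2))) := by
    intro i hi
    simp only [Finset.mem_Icc] at hi
    rw [Finset.prod_Icc_succ_top (by omega : i + 1 ≤ k + 1)]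
    have hc : ((k : ℝ) + 1 + 1) = (k : ℝ) + 2 := by ring
    push_cast
    rw [hc]
    ring
  rw [Finset.sum_congr rfl h1]
  have hc : ((k : ℝ) + 1 + 1) = (k : ℝ) + 2 := by ring
  push_cast
  rw [hc]
  ring

private lemma stmt0_diff {δ : ℝ} (hδ0 : 0 < δ) (hδ1 : δ ≤ 1) {t : ℝ} (ht : 1 ≤ t) :
    t ^ (-δ) - (t + 1) ^ (-δ) ≤ δ * t ^ (-δ - 1) := by
  have ht0 : (0:ℝ) < t := lt_of_lt_of_le one_pos ht
  have hmul : (t + 1) ^ δ = t ^ δ * (1 + 1/t) ^ δ := by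
    rw [← Real.mul_rpow ht0.le (by positivity)]
    rw [mul_add, mul_one, mul_one_div, div_self ht0.ne']
  have hb : (1 + 1/t) ^ δ ≤ 1 + δ * (1/t) :=
    rpow_one_add_le_one_add_mul_self (by linarith [one_div_nonneg.mpr ht0.le]) hδ0.le hδ1
  have hub : (t + 1) ^ δ ≤ t ^ δ * (1 + δ/t) := by
    rw [hmul]
    have := Real.rpow_pos_of_pos ht0 δ
    calc t ^ δ * (1 + 1/t) ^ δ ≤ t ^ δ * (1 + δ * (1/t)) := by
          exact mul_le_mul_of_nonneg_left hb (le_of_lt this)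
      _ = t ^ δ * (1 + δ/t) := by rw [mul_one_div]
  have htp : (0:ℝ) < (t + 1) ^ δ := Real.rpow_pos_of_pos (by linarith) δ
  have htd : (0:ℝ) < t ^ δ := Real.rpow_pos_of_pos ht0 δ
  have hq : (0:ℝ) < 1 + δ/t := by positivity
  have hinv : (t + 1) ^ (-δ) ≥ (t ^ δ * (1 + δ/t))⁻¹ := by
    rw [Real.rpow_neg (by linarith : (0:ℝ) ≤ t + 1)]
    exact inv_anti₀ htp hub
  have hinv2 : (t ^ δ * (1 + δ/t))⁻¹ = t ^ (-δ) * (1 + δ/t)⁻¹ := by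
    rw [mul_inv, Real.rpow_neg ht0.le]
  have hber : 1 - δ/t ≤ (1 + δ/t)⁻¹ := by
    have h := mul_inv_cancel₀ hq.ne'
    nlinarith [inv_nonneg.mpr hq.le, sq_nonneg (δ/t)]
  have hfin : t ^ (-δ) * (δ/t) = δ * t ^ (-δ - 1) := by
    rw [Real.rpow_sub ht0, Real.rpow_one]
    field_simp
  have hnd : (0:ℝ) < t ^ (-δ) := Real.rpow_pos_of_pos ht0 _
  have : t ^ (-δ) * (1 - δ/t) ≤ (t + 1) ^ (-δ) := by
    calc t ^ (-δ) * (1 - δ/t) ≤ t ^ (-δ) * (1 + δ/t)⁻¹ :=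
          mul_le_mul_of_nonneg_left hber hnd.le
      _ = (t ^ δ * (1 + δ/t))⁻¹ := hinv2.symm
      _ ≤ (t + 1) ^ (-δ) := hinv
  nlinarith [this]

set_option maxHeartbeats 1000000 in
private lemma stmt0_main (τ1 τ2 : ℝ) (h1 : 0.1 < τ2) (h2 : τ2 < 0.5) (h3 : 0.5 < τ1)
    (h4 : τ1 < 1) (h5 : τ1 + τ2 < 1) :
    ∃ C > (0:ℝ), ∃ N : ℕ, ∀ k ≥ N,
      Ssum τ1 τ2 k ≤ C * ((k : ℝ) + 1) ^ (-(τ1 - τ2)) := by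
  set δ := τ1 - τ2 with hδdef
  clear_value δ
  have hδ0 : 0 < δ := by rw [hδdef]; linarith
  have hδ1 : δ ≤ 1 := by rw [hδdef]; linarith
  set ε := 1 - (τ1 + τ2) with hεdef
  clear_value ε
  have hε : 0 < ε := by rw [hεdef]; linarith
  obtain ⟨K, hK⟩ := exists_nat_ge ((8:ℝ) ^ (1/ε))
  have hK1 : (8:ℝ) ^ (1/ε) ≤ (K:ℝ) + 1 := le_trans hK (by linarith)
  -- the key numeric step bound
  have step_num : ∀ k : ℕ, K ≤ k →
      δ * ((k:ℝ) + 1) ^ (-δ - 1) ≤ (1/2) * ((k:ℝ) + 2) ^ (-(2 * τ1)) := by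
    intro k hk
    set x : ℝ := (k:ℝ) + 1 with hxdef
    clear_value x
    have hx1 : (1:ℝ) ≤ x := by rw [hxdef]; exact one_le_csucc k
    have hx0 : (0:ℝ) < x := lt_of_lt_of_le one_pos hx1
    have hxK : (8:ℝ) ^ (1/ε) ≤ x := by
      refine le_trans hK1 ?_
      rw [hxdef]
      have : (K:ℝ) ≤ (k:ℝ) := Nat.cast_le.mpr hk
      linarith
    have ha : (8:ℝ) ≤ x ^ ε := by
      have h8 : (0:ℝ) ≤ (8:ℝ) ^ (1/ε) := le_of_lt (Real.rpow_pos_of_pos (by norm_num) _)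
      have := Real.rpow_le_rpow h8 hxK hε.le
      rwa [← Real.rpow_mul (by norm_num : (0:ℝ) ≤ 8), one_div_mul_cancel hε.ne',
        Real.rpow_one] at this
    have hf : x ^ (-ε) ≤ 1/8 := by
      rw [Real.rpow_neg hx0.le]
      rw [show (1:ℝ)/8 = 8⁻¹ by norm_num]
      exact inv_anti₀ (by norm_num) ha
    have he : x ^ (-δ - 1) = x ^ (-(2 * τ1)) * x ^ (-ε) := by
      rw [← Real.rpow_add hx0]
      congr 1
      rw [hδdef, hεdef]; ring
    have hxp : (0:ℝ) < x ^ (-(2 * τ1)) := Real.rpow_pos_of_pos hx0 _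
    have hb : (1/4) * x ^ (-(2 * τ1)) ≤ (x + 1) ^ (-(2 * τ1)) := by
      have hb1 : ((2:ℝ) * x) ^ (-(2 * τ1)) ≤ (x + 1) ^ (-(2 * τ1)) :=
        Real.rpow_le_rpow_of_nonpos (by linarith) (by linarith) (by linarith)
      have hb2 : ((2:ℝ) * x) ^ (-(2 * τ1)) = (2:ℝ) ^ (-(2 * τ1)) * x ^ (-(2 * τ1)) :=
        Real.mul_rpow (by norm_num) hx0.le
      have hb3 : (1/4 : ℝ) ≤ (2:ℝ) ^ (-(2 * τ1)) := two_rpow_quarter (by linarith)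
      nlinarith
    have hmid : δ * x ^ (-δ - 1) ≤ (1/8) * x ^ (-(2 * τ1)) := by
      rw [he]
      have hm1 : x ^ (-(2 * τ1)) * x ^ (-ε) ≤ x ^ (-(2 * τ1)) * (1/8) :=
        mul_le_mul_of_nonneg_left hf hxp.le
      have hm2 : (0:ℝ) ≤ x ^ (-(2 * τ1)) * x ^ (-ε) := by positivity
      nlinarith
    have hgoal : ((k:ℝ) + 2) = x + 1 := by rw [hxdef]; ring
    rw [hgoal]
    nlinarith
  -- constant
  set C : ℝ := (K:ℝ) * ((K:ℝ) + 1) ^ δ + 2 with hCdef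
  clear_value C
  have hCterm : (0:ℝ) ≤ (K:ℝ) * ((K:ℝ) + 1) ^ δ := by positivity
  have hCpos : (0:ℝ) < C := by rw [hCdef]; linarith
  have hC2 : (2:ℝ) ≤ C := by rw [hCdef]; linarith
  -- base case
  have base : Ssum τ1 τ2 K ≤ C * ((K:ℝ) + 1) ^ (-δ) := by
    have hS : Ssum τ1 τ2 K ≤ (K:ℝ) := by
      unfold Ssum
      have hb := Finset.sum_le_sum (s := Finset.Icc 1 K)
        (g := fun _ => (1:ℝ))
        (fun i _ => @term_le_one τ1 τ2 (by linarith) (by linarith) K i)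
      rw [Finset.sum_const, Nat.card_Icc] at hb
      simpa using hb
    have hces : ((K:ℝ) + 1) ^ δ * ((K:ℝ) + 1) ^ (-δ) = 1 := by
      rw [← Real.rpow_add (by positivity), add_neg_cancel, Real.rpow_zero]
    have hpos : (0:ℝ) < ((K:ℝ) + 1) ^ (-δ) := Real.rpow_pos_of_pos (by positivity) _
    calc Ssum τ1 τ2 K ≤ (K:ℝ) := hS
      _ = (K:ℝ) * (((K:ℝ) + 1) ^ δ * ((K:ℝ) + 1) ^ (-δ)) := by rw [hces]; ring
      _ ≤ C * ((K:ℝ) + 1) ^ (-δ) := by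
          rw [hCdef]
          nlinarith
  -- induction
  have ind : ∀ k, K ≤ k → Ssum τ1 τ2 k ≤ C * ((k:ℝ) + 1) ^ (-δ) := by
    intro k hk
    induction k, hk using Nat.le_induction with
    | base => exact base
    | succ n hn ih =>
      have hx0 : (0:ℝ) < ((n:ℝ) + 2) := by positivity
      set x : ℝ := (n:ℝ) + 2 with hxdef
      clear_value x
      have hceq : x ^ (-τ1) * x ^ (-τ2) = x ^ (-(τ1 + τ2)) := by
        rw [show -(τ1 + τ2) = -τ1 + -τ2 by ring, Real.rpow_add hx0]
      have hc0 : (0:ℝ) < x ^ (-(τ1 + τ2)) := Real.rpow_pos_of_pos hx0 _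
      have hc1 : x ^ (-(τ1 + τ2)) ≤ 1 :=
        Real.rpow_le_one_of_one_le_of_nonpos (by rw [hxdef]; linarith [one_le_csucc n])
          (by linarith)
      have ha2 : (x ^ (-τ1)) ^ 2 = x ^ (-(2 * τ1)) := by
        rw [sq, ← Real.rpow_add hx0]
        congr 1; ring
      have hrec := Ssum_rec τ1 τ2 n
      rw [← hxdef, hceq, ha2] at hrec
      have hA0 : (0:ℝ) < ((n:ℝ) + 1) ^ (-δ) := Real.rpow_pos_of_pos (by positivity) _
      have hB0 : (0:ℝ) < x ^ (-δ) := Real.rpow_pos_of_pos hx0 _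
      have hAB : x ^ (-δ) ≤ ((n:ℝ) + 1) ^ (-δ) :=
        Real.rpow_le_rpow_of_nonpos (by positivity) (by rw [hxdef]; linarith) (by linarith)
      have hdiff : ((n:ℝ) + 1) ^ (-δ) - x ^ (-δ) ≤ δ * ((n:ℝ) + 1) ^ (-δ - 1) := by
        have hd := stmt0_diff hδ0 hδ1 (t := (n:ℝ) + 1) (one_le_csucc n)
        have hx1 : ((n:ℝ) + 1 + 1) = x := by rw [hxdef]; ring
        rwa [hx1] at hd
      have hstep := step_num n hn
      have hcB : x ^ (-(τ1 + τ2)) * x ^ (-δ) = x ^ (-(2 * τ1)) := by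
        rw [← Real.rpow_add hx0]
        congr 1
        rw [hδdef]; ring
      have hS0 : Ssum τ1 τ2 n ≤ C * ((n:ℝ) + 1) ^ (-δ) := ih
      set Sn : ℝ := Ssum τ1 τ2 n with hSndef
      clear_value Sn
      have h1c : (0:ℝ) ≤ 1 - x ^ (-(τ1 + τ2)) := by linarith
      have key : (1 - x ^ (-(τ1 + τ2))) * Sn + x ^ (-(2 * τ1))
          ≤ C * x ^ (-δ) := by
        have e1 : (1 - x ^ (-(τ1 + τ2))) * Sn
            ≤ (1 - x ^ (-(τ1 + τ2))) * (C * ((n:ℝ) + 1) ^ (-δ)) :=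
          mul_le_mul_of_nonneg_left hS0 h1c
        have e2 : x ^ (-(τ1 + τ2)) * x ^ (-δ) ≤ x ^ (-(τ1 + τ2)) * ((n:ℝ) + 1) ^ (-δ) :=
          mul_le_mul_of_nonneg_left hAB hc0.le
        have e3 : C * (((n:ℝ) + 1) ^ (-δ) - x ^ (-δ)) ≤ C * ((1/2) * ((n:ℝ) + 2) ^ (-(2 * τ1))) :=
          mul_le_mul_of_nonneg_left (le_trans hdiff hstep) hCpos.le
        rw [← hxdef] at e3
        have e4 : C * x ^ (-(2 * τ1)) ≤ C * (x ^ (-(τ1 + τ2)) * ((n:ℝ) + 1) ^ (-δ)) := by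
          refine mul_le_mul_of_nonneg_left ?_ hCpos.le
          rw [← hcB]
          exact e2
        have hx2p : (0:ℝ) < x ^ (-(2 * τ1)) := Real.rpow_pos_of_pos hx0 _
        clear hrec base step_num hS0 hSndef ih hK hK1
        nlinarith [mul_nonneg (by linarith : (0:ℝ) ≤ C - 2) hx2p.le]
      have hcast : ((↑(n + 1) : ℝ) + 1) = x := by push_cast; rw [hxdef]; ring
      rw [hcast, hrec]
      exact key
  exact ⟨C, hCpos, K, ind⟩

/-- ∑_{i=1}^k a_i² ∏_{j=i+1}^k (1 - a_j λ_j) = O((k+1)^{τ2-τ1} ln(k+1)),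
where a_k = (k+1)^{-τ1}, λ_k = (k+1)^{-τ2}. -/
theorem stmt0 (τ1 τ2 : ℝ) (h1 : 0.1 < τ2) (h2 : τ2 < 0.5) (h3 : 0.5 < τ1)
    (h4 : τ1 < 1) (h5 : τ1 + τ2 < 1) (h6 : 3 * τ2 < τ1) :
    ∃ C > (0:ℝ), ∃ N : ℕ, ∀ k ≥ N,
      ∑ i ∈ Finset.Icc 1 k,
          ((i + 1 : ℝ) ^ (-τ1)) ^ 2 *
            ∏ j ∈ Finset.Icc (i + 1) k,
              (1 - (j + 1 : ℝ) ^ (-τ1) * (j + 1 : ℝ) ^ (-τ2)) ≤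
        C * (k + 1 : ℝ) ^ (τ2 - τ1) * Real.log (k + 1) := by
  obtain ⟨C, hC, N, h⟩ := stmt0_main τ1 τ2 h1 h2 h3 h4 h5
  refine ⟨C, hC, max N 2, fun k hk => ?_⟩
  have hkN : N ≤ k := le_trans (le_max_left _ _) hk
  have hk2 : 2 ≤ k := le_trans (le_max_right _ _) hk
  have hmain := h k hkN
  have hlog : (1:ℝ) ≤ Real.log ((k:ℝ) + 1) := by
    have hek : Real.exp 1 ≤ (k:ℝ) + 1 := by
      have he := Real.exp_one_lt_d9
      have hcast : (2:ℝ) ≤ (k:ℝ) := by exact_mod_cast hk2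
      norm_num at he
      linarith
    calc (1:ℝ) = Real.log (Real.exp 1) := (Real.log_exp 1).symm
      _ ≤ Real.log ((k:ℝ) + 1) := Real.log_le_log (Real.exp_pos 1) hek
  have heq : ((k:ℝ) + 1) ^ (τ2 - τ1) = ((k:ℝ) + 1) ^ (-(τ1 - τ2)) := by
    congr 1; ring
  have hpos : (0:ℝ) ≤ C * ((k:ℝ) + 1) ^ (τ2 - τ1) := by positivity
  calc (∑ i ∈ Finset.Icc 1 k,
      ((i + 1 : ℝ) ^ (-τ1)) ^ 2 *
        ∏ j ∈ Finset.Icc (i + 1) k,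
          (1 - (j + 1 : ℝ) ^ (-τ1) * (j + 1 : ℝ) ^ (-τ2)))
      ≤ C * ((k:ℝ) + 1) ^ (τ2 - τ1) := by rw [heq]; exact hmain
    _ ≤ C * ((k:ℝ) + 1) ^ (τ2 - τ1) * Real.log ((k:ℝ) + 1) :=
        le_mul_of_one_le_right hpos hlog
end

section
/- For real sequences a_k = 1/(k+1)^{τ1} and λ_k = 1/(k+1)^{τ2} with 0.1 < τ2 < 0.5 < τ1 < 1, τ1 + τ2 < 1, and 3τ2 < τ1, the weighted partial sums satisfy ∑_{i=1}^{k} a_i^2 √(k-i+1) ∏_{j=i+1}^{k} (1 - a_j λ_j) = O((k+1)^{(3τ2-τ1)/2} ln^{3/2}(k+1)) as k → ∞. -/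
set_option maxHeartbeats 1000000


open Finset Filter

lemma prod_le_exp_aux (s : ℝ) (hs0 : 0 < s) (i k : ℕ) :
    ∏ j ∈ Finset.Icc (i+1) k, (1 - ((j:ℝ)+1) ^ (-s)) ≤
      Real.exp (-(((k - i : ℕ) : ℝ) * ((k:ℝ)+1) ^ (-s))) := by
  have hnonneg : ∀ j ∈ Finset.Icc (i+1) k, (0:ℝ) ≤ 1 - ((j:ℝ)+1) ^ (-s) := by
    intro j hj
    have : ((j:ℝ)+1) ^ (-s) ≤ 1 :=
      Real.rpow_le_one_of_one_le_of_nonpos (by linarith [Nat.cast_nonneg (α := ℝ) j])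
        (by linarith)
    linarith
  have key : (((k - i : ℕ) : ℝ) * ((k:ℝ)+1) ^ (-s)) ≤
      ∑ j ∈ Finset.Icc (i+1) k, ((j:ℝ)+1) ^ (-s) := by
    have h := Finset.card_nsmul_le_sum (Finset.Icc (i+1) k)
      (fun j => ((j:ℝ)+1) ^ (-s)) (((k:ℝ)+1) ^ (-s)) ?_
    · have hc : (Finset.Icc (i+1) k).card = k - i := by
        rw [Nat.card_Icc]; omega
      rwa [hc, nsmul_eq_mul] at h
    · intro j hj
      have hjk : j ≤ k := (Finset.mem_Icc.1 hj).2
      exact Real.rpow_le_rpow_of_nonpos (by positivity)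
        (by have : (j:ℝ) ≤ (k:ℝ) := Nat.cast_le.2 hjk; linarith)
        (by linarith)
  calc ∏ j ∈ Finset.Icc (i+1) k, (1 - ((j:ℝ)+1) ^ (-s))
      ≤ ∏ j ∈ Finset.Icc (i+1) k, Real.exp (-(((j:ℝ)+1) ^ (-s))) := by
        refine Finset.prod_le_prod hnonneg ?_
        intro j hj
        have := Real.add_one_le_exp (-(((j:ℝ)+1) ^ (-s)))
        linarith
    _ = Real.exp (∑ j ∈ Finset.Icc (i+1) k, -(((j:ℝ)+1) ^ (-s))) := by
        rw [Real.exp_sum]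
    _ ≤ Real.exp (-(((k - i : ℕ) : ℝ) * ((k:ℝ)+1) ^ (-s))) := by
        apply Real.exp_le_exp.2
        have hsum : ∑ j ∈ Finset.Icc (i+1) k, -(((j:ℝ)+1) ^ (-s)) =
            -∑ j ∈ Finset.Icc (i+1) k, (((j:ℝ)+1) ^ (-s)) := by simp
        rw [hsum]
        exact neg_le_neg key

lemma ev_aux (s : ℝ) (hs0 : 0 < s) (hs1 : s < 1) : ∀ᶠ k : ℕ in atTop,
    2 * ⌈2*((k:ℝ)+1)^s * Real.log ((k:ℝ)+1)⌉₊ ≤ k + 1 := by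
  set ε := (1-s)/2 with hε
  have hε0 : 0 < ε := by simp [hε]; linarith
  set s' := s + ε with hs'
  have hs'1 : s' < 1 := by simp [hs', hε]; linarith
  have t1 : Tendsto (fun k:ℕ => (k:ℝ)+1) atTop atTop :=
    tendsto_atTop_add_const_right _ 1 tendsto_natCast_atTop_atTop
  have t2 := (tendsto_rpow_atTop (by linarith : (0:ℝ) < 1 - s')).comp t1
  filter_upwards [t2.eventually_ge_atTop (2*(2/ε+1))] with k hk
  have hk1 : (1:ℝ) ≤ (k:ℝ)+1 := by linarith [Nat.cast_nonneg (α := ℝ) k]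
  have hkpos : (0:ℝ) < (k:ℝ)+1 := by positivity
  have hone : (1:ℝ) ≤ ((k:ℝ)+1)^s' := Real.one_le_rpow hk1 (by linarith)
  have hX : 2*((k:ℝ)+1)^s * Real.log ((k:ℝ)+1) ≤ (2/ε) * ((k:ℝ)+1)^s' := by
    have hlog : Real.log ((k:ℝ)+1) ≤ ((k:ℝ)+1)^ε / ε :=
      Real.log_le_rpow_div (by positivity) hε0
    have hmul : ((k:ℝ)+1)^s * ((k:ℝ)+1)^ε = ((k:ℝ)+1)^s' := by
      rw [← Real.rpow_add hkpos]
    have hps : (0:ℝ) ≤ ((k:ℝ)+1)^s := by positivity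
    calc 2*((k:ℝ)+1)^s * Real.log ((k:ℝ)+1)
        ≤ 2*((k:ℝ)+1)^s * (((k:ℝ)+1)^ε / ε) := by
          apply mul_le_mul_of_nonneg_left hlog (by positivity)
      _ = (2/ε) * (((k:ℝ)+1)^s * ((k:ℝ)+1)^ε) := by ring
      _ = (2/ε) * ((k:ℝ)+1)^s' := by rw [hmul]
  have hceil : (⌈2*((k:ℝ)+1)^s * Real.log ((k:ℝ)+1)⌉₊ : ℝ) ≤ ((k:ℝ)+1)/2 := by
    have hXnn : (0:ℝ) ≤ 2*((k:ℝ)+1)^s * Real.log ((k:ℝ)+1) := by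
      have := Real.log_nonneg hk1
      positivity
    have h1 := Nat.ceil_lt_add_one hXnn
    have h2 : 2*(2/ε+1) * ((k:ℝ)+1)^s' ≤ ((k:ℝ)+1) := by
      calc 2*(2/ε+1) * ((k:ℝ)+1)^s' ≤ ((k:ℝ)+1)^(1-s') * ((k:ℝ)+1)^s' :=
            mul_le_mul_of_nonneg_right hk (le_of_lt (Real.rpow_pos_of_pos hkpos s'))
        _ = ((k:ℝ)+1)^((1-s')+s') := (Real.rpow_add hkpos _ _).symm
        _ = (k:ℝ)+1 := by norm_num
    nlinarith [hX, hone]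
  have : (2 * ⌈2*((k:ℝ)+1)^s * Real.log ((k:ℝ)+1)⌉₊ : ℝ) ≤ (k:ℝ)+1 := by
    push_cast
    linarith
  exact_mod_cast this

lemma four_rpow : (4:ℝ) ^ ((3:ℝ)/2) = 8 := by
  have h4 : (4:ℝ) = (2:ℝ) ^ (2:ℝ) := by
    rw [show (2:ℝ) = ((2:ℕ):ℝ) by norm_num, Real.rpow_natCast]; norm_num
  rw [h4, ← Real.rpow_mul (by norm_num : (0:ℝ) ≤ 2)]
  norm_num

/-- ∑_{i=1}^k a_i² √(k-i+1) ∏_{j=i+1}^k (1 - a_j λ_j)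
    = O((k+1)^{(3τ2-τ1)/2} ln^{3/2}(k+1)). -/
theorem stmt1 (τ1 τ2 : ℝ) (h1 : 0.1 < τ2) (h2 : τ2 < 0.5) (h3 : 0.5 < τ1)
    (h4 : τ1 < 1) (h5 : τ1 + τ2 < 1) (h6 : 3 * τ2 < τ1) :
    ∃ C > (0:ℝ), ∃ N : ℕ, ∀ k ≥ N,
      ∑ i ∈ Finset.Icc 1 k,
          ((i + 1 : ℝ) ^ (-τ1)) ^ 2 * Real.sqrt ((k - i + 1 : ℕ) : ℝ) *
            ∏ j ∈ Finset.Icc (i + 1) k,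
              (1 - (j + 1 : ℝ) ^ (-τ1) * (j + 1 : ℝ) ^ (-τ2)) ≤
        C * (k + 1 : ℝ) ^ ((3 * τ2 - τ1) / 2) * Real.log (k + 1) ^ ((3:ℝ) / 2) := by
  set s := τ1 + τ2 with hsdef
  have hs0 : 0 < s := by rw [hsdef]; linarith
  have hs1 : s < 1 := h5
  set e := (3 * τ2 - τ1) / 2 with hedef
  refine ⟨33, by norm_num, ?_⟩
  have ev2 : ∀ᶠ k : ℕ in atTop, (1:ℝ) ≤ Real.log ((k:ℝ)+1) := by
    filter_upwards [eventually_ge_atTop 2] with k hk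
    have hk3 : (3:ℝ) ≤ (k:ℝ)+1 := by
      have : (2:ℝ) ≤ (k:ℝ) := by exact_mod_cast hk
      linarith
    have hexp : Real.exp 1 ≤ (k:ℝ)+1 := by
      have := Real.exp_one_lt_d9
      linarith
    calc (1:ℝ) = Real.log (Real.exp 1) := (Real.log_exp 1).symm
      _ ≤ Real.log ((k:ℝ)+1) := Real.log_le_log (Real.exp_pos 1) hexp
  obtain ⟨N, hN⟩ := eventually_atTop.mp ((ev_aux s hs0 hs1).and ev2)
  refine ⟨N, ?_⟩
  intro k hk
  obtain ⟨hT2, hlog1⟩ := hN k hk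
  set K : ℝ := (k:ℝ)+1 with hKdef
  have hKpos : (0:ℝ) < K := by positivity
  have hK1 : (1:ℝ) ≤ K := by rw [hKdef]; linarith [Nat.cast_nonneg (α := ℝ) k]
  set X : ℝ := 2*K^s * Real.log K with hXdef
  set T : ℕ := ⌈X⌉₊ with hTdef
  have hKs1 : (1:ℝ) ≤ K^s := Real.one_le_rpow hK1 (le_of_lt hs0)
  have hlogpos : (0:ℝ) < Real.log K := by linarith
  have hX1 : (1:ℝ) ≤ X := by
    rw [hXdef]; nlinarith
  have hXT : X ≤ (T:ℝ) := Nat.le_ceil X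
  have hT1 : 1 ≤ T := by
    have : (1:ℝ) ≤ (T:ℝ) := le_trans hX1 hXT
    exact_mod_cast this
  have hTX : (T:ℝ) ≤ 2*X := by
    have h := Nat.ceil_lt_add_one (le_trans zero_le_one hX1)
    rw [← hTdef] at h
    linarith
  have hTk : T ≤ k := by omega
  have hk1 : 1 ≤ k := by omega
  have hXpos : (0:ℝ) < X := lt_of_lt_of_le zero_lt_one hX1
  have h2X : (0:ℝ) < 2*X := by linarith
  -- rewrite LHS products in terms of s
  have hLHS : ∑ i ∈ Finset.Icc 1 k,
          ((i + 1 : ℝ) ^ (-τ1)) ^ 2 * Real.sqrt ((k - i + 1 : ℕ) : ℝ) *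
            ∏ j ∈ Finset.Icc (i + 1) k,
              (1 - (j + 1 : ℝ) ^ (-τ1) * (j + 1 : ℝ) ^ (-τ2)) =
      ∑ i ∈ Finset.Icc 1 k,
          ((i + 1 : ℝ) ^ (-τ1)) ^ 2 * Real.sqrt ((k - i + 1 : ℕ) : ℝ) *
            ∏ j ∈ Finset.Icc (i + 1) k, (1 - ((j:ℝ) + 1) ^ (-s)) := by
    refine Finset.sum_congr rfl ?_
    intro i _
    congr 1
    refine Finset.prod_congr rfl ?_
    intro j _
    congr 1
    rw [← Real.rpow_add (by positivity : (0:ℝ) < (j:ℝ)+1)]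
    congr 1
    rw [hsdef]; ring
  rw [hLHS]
  have hP_nonneg : ∀ i : ℕ,
      (0:ℝ) ≤ ∏ j ∈ Finset.Icc (i + 1) k, (1 - ((j:ℝ) + 1) ^ (-s)) := by
    intro i
    apply Finset.prod_nonneg
    intro j _
    have : ((j:ℝ)+1) ^ (-s) ≤ 1 :=
      Real.rpow_le_one_of_one_le_of_nonpos (by linarith [Nat.cast_nonneg (α := ℝ) j])
        (by linarith)
    linarith
  have hP_le_one : ∀ i : ℕ,
      ∏ j ∈ Finset.Icc (i + 1) k, (1 - ((j:ℝ) + 1) ^ (-s)) ≤ 1 := by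
    intro i
    apply Finset.prod_le_one
    · intro j _
      have : ((j:ℝ)+1) ^ (-s) ≤ 1 :=
        Real.rpow_le_one_of_one_le_of_nonpos (by linarith [Nat.cast_nonneg (α := ℝ) j])
          (by linarith)
      linarith
    · intro j _
      have : (0:ℝ) < ((j:ℝ)+1) ^ (-s) := by positivity
      linarith
  rw [← Finset.sum_filter_add_sum_filter_not (Finset.Icc 1 k) (fun i => i + T ≤ k)]
  have hlog_pow1 : (1:ℝ) ≤ Real.log K ^ ((3:ℝ)/2) :=
    Real.one_le_rpow hlog1 (by norm_num)
  have hlog_pow0 : (0:ℝ) ≤ Real.log K ^ ((3:ℝ)/2) := by linarith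
  have hKe_pos : (0:ℝ) < K ^ e := Real.rpow_pos_of_pos hKpos e
  -- Part A
  have hA : ∑ i ∈ (Finset.Icc 1 k).filter (fun i => i + T ≤ k),
        ((i + 1 : ℝ) ^ (-τ1)) ^ 2 * Real.sqrt ((k - i + 1 : ℕ) : ℝ) *
          ∏ j ∈ Finset.Icc (i + 1) k, (1 - ((j:ℝ) + 1) ^ (-s)) ≤
      K ^ e * Real.log K ^ ((3:ℝ)/2) := by
    have hbound : ∀ i ∈ (Finset.Icc 1 k).filter (fun i => i + T ≤ k),
        ((i + 1 : ℝ) ^ (-τ1)) ^ 2 * Real.sqrt ((k - i + 1 : ℕ) : ℝ) *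
          ∏ j ∈ Finset.Icc (i + 1) k, (1 - ((j:ℝ) + 1) ^ (-s)) ≤
        K ^ (-(3:ℝ)/2) := by
      intro i hi
      rw [Finset.mem_filter, Finset.mem_Icc] at hi
      obtain ⟨⟨hi1, hik⟩, hiT⟩ := hi
      have hx : ((i:ℝ) + 1) ^ (-τ1) ≤ 1 :=
        Real.rpow_le_one_of_one_le_of_nonpos (by linarith [Nat.cast_nonneg (α := ℝ) i])
          (by linarith)
      have hx0 : (0:ℝ) ≤ ((i:ℝ) + 1) ^ (-τ1) := by positivity
      have hx2 : (((i:ℝ) + 1) ^ (-τ1)) ^ 2 ≤ 1 := by nlinarith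
      have hle : ((k - i + 1 : ℕ) : ℝ) ≤ K := by
        rw [hKdef]
        exact_mod_cast (by omega : k - i + 1 ≤ k + 1)
      have hsq : Real.sqrt ((k - i + 1 : ℕ) : ℝ) ≤ K ^ ((1:ℝ)/2) := by
        rw [show K ^ ((1:ℝ)/2) = Real.sqrt K from (Real.sqrt_eq_rpow K).symm]
        exact Real.sqrt_le_sqrt hle
      -- product bound
      have hKs_inv : K ^ s * K ^ (-s) = 1 := by
        rw [← Real.rpow_add hKpos]; simp
      have hXe : X * K ^ (-s) = 2 * Real.log K := by
        rw [hXdef]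
        calc 2*K^s*Real.log K * K^(-s) = 2*Real.log K*(K^s * K^(-s)) := by ring
          _ = 2*Real.log K := by rw [hKs_inv]; ring
      have hki : X ≤ ((k - i : ℕ) : ℝ) := by
        have h' : T ≤ k - i := by omega
        exact le_trans hXT (by exact_mod_cast h')
      have hPK : ∏ j ∈ Finset.Icc (i + 1) k, (1 - ((j:ℝ) + 1) ^ (-s)) ≤
          K ^ (-2:ℝ) := by
        have hPexp := prod_le_exp_aux s hs0 i k
        rw [← hKdef] at hPexp
        refine le_trans hPexp ?_
        have h2 : Real.exp (-(((k - i : ℕ) : ℝ) * K ^ (-s))) ≤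
            Real.exp (-(2*Real.log K)) := by
          apply Real.exp_le_exp.2
          apply neg_le_neg
          rw [← hXe]
          exact mul_le_mul_of_nonneg_right hki (by positivity)
        have h3 : Real.exp (-(2*Real.log K)) = K ^ (-2:ℝ) := by
          rw [Real.rpow_def_of_pos hKpos]
          congr 1
          ring
        rw [← h3]
        exact h2
      calc ((i + 1 : ℝ) ^ (-τ1)) ^ 2 * Real.sqrt ((k - i + 1 : ℕ) : ℝ) *
            ∏ j ∈ Finset.Icc (i + 1) k, (1 - ((j:ℝ) + 1) ^ (-s))
          ≤ 1 * K ^ ((1:ℝ)/2) * K ^ (-2:ℝ) := by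
            apply mul_le_mul
              (mul_le_mul hx2 hsq (Real.sqrt_nonneg _) (by norm_num))
              hPK (hP_nonneg i) (by positivity)
        _ = K ^ (-(3:ℝ)/2) := by
            rw [one_mul, ← Real.rpow_add hKpos]
            norm_num
    calc ∑ i ∈ (Finset.Icc 1 k).filter (fun i => i + T ≤ k),
          ((i + 1 : ℝ) ^ (-τ1)) ^ 2 * Real.sqrt ((k - i + 1 : ℕ) : ℝ) *
            ∏ j ∈ Finset.Icc (i + 1) k, (1 - ((j:ℝ) + 1) ^ (-s)) ≤
        ((Finset.Icc 1 k).filter (fun i => i + T ≤ k)).card • K ^ (-(3:ℝ)/2) :=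
          Finset.sum_le_card_nsmul _ _ _ hbound
      _ ≤ K ^ e * Real.log K ^ ((3:ℝ)/2) := by
          rw [nsmul_eq_mul]
          have hcard : ((Finset.Icc 1 k).filter (fun i => i + T ≤ k)).card ≤ k :=
            le_trans (Finset.card_filter_le _ _) (by simp [Nat.card_Icc])
          have hcK : (((Finset.Icc 1 k).filter (fun i => i + T ≤ k)).card : ℝ) ≤ K := by
            rw [hKdef]
            have : (((Finset.Icc 1 k).filter (fun i => i + T ≤ k)).card : ℝ) ≤ (k:ℝ) :=
              Nat.cast_le.2 hcard
            linarith
          have hKn : (0:ℝ) ≤ K ^ (-(3:ℝ)/2) := by positivity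
          have step1 : (((Finset.Icc 1 k).filter (fun i => i + T ≤ k)).card : ℝ) *
              K ^ (-(3:ℝ)/2) ≤ K * K ^ (-(3:ℝ)/2) :=
            mul_le_mul_of_nonneg_right hcK hKn
          have step2 : K * K ^ (-(3:ℝ)/2) = K ^ ((-1:ℝ)/2) := by
            nth_rewrite 1 [show K = K ^ (1:ℝ) from (Real.rpow_one K).symm]
            rw [← Real.rpow_add hKpos]
            norm_num
          have step3 : K ^ ((-1:ℝ)/2) ≤ K ^ e := by
            apply Real.rpow_le_rpow_of_exponent_le hK1
            rw [hedef]
            linarith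
          have step4 : K ^ e ≤ K ^ e * Real.log K ^ ((3:ℝ)/2) :=
            le_mul_of_one_le_right (le_of_lt hKe_pos) hlog_pow1
          linarith [step1, step2 ▸ step1]
  -- Part B
  have hB : ∑ i ∈ (Finset.Icc 1 k).filter (fun i => ¬(i + T ≤ k)),
        ((i + 1 : ℝ) ^ (-τ1)) ^ 2 * Real.sqrt ((k - i + 1 : ℕ) : ℝ) *
          ∏ j ∈ Finset.Icc (i + 1) k, (1 - ((j:ℝ) + 1) ^ (-s)) ≤
      32 * (K ^ e * Real.log K ^ ((3:ℝ)/2)) := by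
    set B := (Finset.Icc 1 k).filter (fun i => ¬(i + T ≤ k)) with hBdef
    have hcardB : B.card ≤ T := by
      have hsub : B ⊆ Finset.Icc (k - T + 1) k := by
        intro i hi
        rw [hBdef, Finset.mem_filter, Finset.mem_Icc] at hi
        rw [Finset.mem_Icc]
        omega
      calc B.card ≤ (Finset.Icc (k - T + 1) k).card := Finset.card_le_card hsub
        _ ≤ T := by rw [Nat.card_Icc]; omega
    have hbound : ∀ i ∈ B,
        ((i + 1 : ℝ) ^ (-τ1)) ^ 2 * Real.sqrt ((k - i + 1 : ℕ) : ℝ) *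
          ∏ j ∈ Finset.Icc (i + 1) k, (1 - ((j:ℝ) + 1) ^ (-s)) ≤
        4 * K ^ (-(2*τ1)) * (2*X) ^ ((1:ℝ)/2) := by
      intro i hi
      rw [hBdef, Finset.mem_filter, Finset.mem_Icc] at hi
      obtain ⟨⟨hi1, hik⟩, hiT⟩ := hi
      have hTle : 2*(T:ℝ) ≤ K := by
        rw [hKdef]
        exact_mod_cast hT2
      have hiTr : (k:ℝ) + 1 ≤ (i:ℝ) + (T:ℝ) := by
        exact_mod_cast (by omega : k + 1 ≤ i + T)
      have hKi : K/2 ≤ (i:ℝ) + 1 := by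
        rw [hKdef] at *
        linarith
      have hhalf : (0:ℝ) < K/2 := by linarith
      have hx : ((i:ℝ) + 1) ^ (-τ1) ≤ (K/2) ^ (-τ1) :=
        Real.rpow_le_rpow_of_nonpos hhalf hKi (by linarith)
      have hx0 : (0:ℝ) ≤ ((i:ℝ) + 1) ^ (-τ1) := by positivity
      have hx2 : (((i:ℝ) + 1) ^ (-τ1)) ^ 2 ≤ ((K/2) ^ (-τ1)) ^ 2 :=
        pow_le_pow_left₀ hx0 hx 2
      have hsquare : ((K/2) ^ (-τ1)) ^ 2 = (K/2) ^ (-(2*τ1)) := by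
        rw [← Real.rpow_natCast ((K/2) ^ (-τ1)) 2, ← Real.rpow_mul (le_of_lt hhalf)]
        congr 1
        push_cast
        ring
      have h2t : (2:ℝ) ^ (2*τ1) ≤ 4 := by
        have h22 : (2:ℝ) ^ (2:ℝ) = 4 := by
          rw [show (2:ℝ) = ((2:ℕ):ℝ) by norm_num]
          rw [Real.rpow_natCast]
          norm_num
        calc (2:ℝ) ^ (2*τ1) ≤ (2:ℝ) ^ (2:ℝ) :=
            Real.rpow_le_rpow_of_exponent_le (by norm_num) (by linarith)
          _ = 4 := h22
      have hhalfpow : (K/2) ^ (-(2*τ1)) ≤ 4 * K ^ (-(2*τ1)) := by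
        rw [Real.div_rpow (le_of_lt hKpos) (by norm_num : (0:ℝ) ≤ 2)]
        rw [Real.rpow_neg (by norm_num : (0:ℝ) ≤ 2)]
        rw [div_eq_mul_inv, inv_inv]
        have hKp : (0:ℝ) ≤ K ^ (-(2*τ1)) := by positivity
        calc K ^ (-(2*τ1)) * (2:ℝ) ^ (2*τ1) ≤ K ^ (-(2*τ1)) * 4 :=
            mul_le_mul_of_nonneg_left h2t hKp
          _ = 4 * K ^ (-(2*τ1)) := by ring
      have hsq : Real.sqrt ((k - i + 1 : ℕ) : ℝ) ≤ (2*X) ^ ((1:ℝ)/2) := by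
        have hle : ((k - i + 1 : ℕ) : ℝ) ≤ 2*X := by
          have h' : k - i + 1 ≤ T := by omega
          have : ((k - i + 1 : ℕ) : ℝ) ≤ (T:ℝ) := Nat.cast_le.2 h'
          linarith
        rw [show (2*X) ^ ((1:ℝ)/2) = Real.sqrt (2*X) from (Real.sqrt_eq_rpow _).symm]
        exact Real.sqrt_le_sqrt hle
      calc ((i + 1 : ℝ) ^ (-τ1)) ^ 2 * Real.sqrt ((k - i + 1 : ℕ) : ℝ) *
            ∏ j ∈ Finset.Icc (i + 1) k, (1 - ((j:ℝ) + 1) ^ (-s))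
          ≤ (4 * K ^ (-(2*τ1))) * (2*X) ^ ((1:ℝ)/2) * 1 := by
            apply mul_le_mul
              (mul_le_mul (le_trans hx2 (hsquare ▸ hhalfpow)) hsq
                (Real.sqrt_nonneg _) (by positivity))
              (hP_le_one i) (hP_nonneg i) (by positivity)
        _ = 4 * K ^ (-(2*τ1)) * (2*X) ^ ((1:ℝ)/2) := by ring
    have hsum : ∑ i ∈ B,
        ((i + 1 : ℝ) ^ (-τ1)) ^ 2 * Real.sqrt ((k - i + 1 : ℕ) : ℝ) *
          ∏ j ∈ Finset.Icc (i + 1) k, (1 - ((j:ℝ) + 1) ^ (-s)) ≤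
        (T:ℝ) * (4 * K ^ (-(2*τ1)) * (2*X) ^ ((1:ℝ)/2)) := by
      calc _ ≤ B.card • (4 * K ^ (-(2*τ1)) * (2*X) ^ ((1:ℝ)/2)) :=
            Finset.sum_le_card_nsmul _ _ _ hbound
        _ ≤ (T:ℝ) * (4 * K ^ (-(2*τ1)) * (2*X) ^ ((1:ℝ)/2)) := by
            rw [nsmul_eq_mul]
            apply mul_le_mul_of_nonneg_right (Nat.cast_le.2 hcardB) (by positivity)
    refine le_trans hsum ?_
    have h1 : (T:ℝ) * (4 * K ^ (-(2*τ1)) * (2*X) ^ ((1:ℝ)/2)) ≤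
        4 * K ^ (-(2*τ1)) * ((2*X) * (2*X) ^ ((1:ℝ)/2)) := by
      have hKp : (0:ℝ) ≤ K ^ (-(2*τ1)) := by positivity
      have hXp : (0:ℝ) ≤ (2*X) ^ ((1:ℝ)/2) := Real.rpow_nonneg (le_of_lt h2X) _
      calc (T:ℝ) * (4 * K ^ (-(2*τ1)) * (2*X) ^ ((1:ℝ)/2))
          ≤ (2*X) * (4 * K ^ (-(2*τ1)) * (2*X) ^ ((1:ℝ)/2)) :=
            mul_le_mul_of_nonneg_right hTX
              (mul_nonneg (mul_nonneg (by norm_num) hKp) hXp)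
        _ = 4 * K ^ (-(2*τ1)) * ((2*X) * (2*X) ^ ((1:ℝ)/2)) := by ring
    refine le_trans h1 ?_
    have h2 : (2*X) * (2*X) ^ ((1:ℝ)/2) = (2*X) ^ ((3:ℝ)/2) := by
      nth_rewrite 1 [show (2*X) = (2*X) ^ (1:ℝ) from (Real.rpow_one _).symm]
      rw [← Real.rpow_add h2X]
      norm_num
    rw [h2]
    have h3 : (2*X) ^ ((3:ℝ)/2) = 8 * (K^s) ^ ((3:ℝ)/2) * Real.log K ^ ((3:ℝ)/2) := by
      have hXX : 2*X = 4 * (K^s * Real.log K) := by rw [hXdef]; ring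
      rw [hXX]
      rw [Real.mul_rpow (by norm_num : (0:ℝ) ≤ 4) (by positivity)]
      rw [Real.mul_rpow (by positivity : (0:ℝ) ≤ K^s) (le_of_lt hlogpos)]
      rw [four_rpow]
      ring
    rw [h3]
    have h4 : K ^ (-(2*τ1)) * (K^s) ^ ((3:ℝ)/2) = K ^ e := by
      rw [← Real.rpow_mul (le_of_lt hKpos)]
      rw [← Real.rpow_add hKpos]
      congr 1
      rw [hedef, hsdef]
      ring
    have hfin : 4 * K ^ (-(2*τ1)) * (8 * (K^s) ^ ((3:ℝ)/2) * Real.log K ^ ((3:ℝ)/2)) =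
        32 * (K ^ e * Real.log K ^ ((3:ℝ)/2)) := by
      rw [← h4]; ring
    exact le_of_eq hfin
  calc (∑ i ∈ (Finset.Icc 1 k).filter (fun i => i + T ≤ k),
          ((i + 1 : ℝ) ^ (-τ1)) ^ 2 * Real.sqrt ((k - i + 1 : ℕ) : ℝ) *
            ∏ j ∈ Finset.Icc (i + 1) k, (1 - ((j:ℝ) + 1) ^ (-s))) +
        ∑ i ∈ (Finset.Icc 1 k).filter (fun i => ¬(i + T ≤ k)),
          ((i + 1 : ℝ) ^ (-τ1)) ^ 2 * Real.sqrt ((k - i + 1 : ℕ) : ℝ) *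
            ∏ j ∈ Finset.Icc (i + 1) k, (1 - ((j:ℝ) + 1) ^ (-s))
      ≤ K ^ e * Real.log K ^ ((3:ℝ)/2) + 32 * (K ^ e * Real.log K ^ ((3:ℝ)/2)) :=
        add_le_add hA hB
    _ = 33 * K ^ e * Real.log K ^ ((3:ℝ)/2) := by ring
end

section
/- Let {a_k} and {λ_k} be positive sequences with a_k λ_k ∈ (0,1) for all k and ∑_k a_k λ_k = ∞. Let {b_k} be a nonnegative sequence with b_k = o(a_k λ_k). Then ∑_{i=0}^{k} b_i ∏_{j=i+1}^{k} (1 - a_j λ_j) → 0 as k → ∞. -/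
open Filter Asymptotics

private lemma tel9 (x : ℕ → ℝ) (N : ℕ) : ∀ k,
    ∑ i ∈ Finset.Icc N k, x i * ∏ j ∈ Finset.Icc (i+1) k, (1 - x j)
      = 1 - ∏ j ∈ Finset.Icc N k, (1 - x j) := by
  intro k
  induction k with
  | zero =>
    rcases Nat.eq_zero_or_pos N with h | h
    · subst h; simp
    · rw [Finset.Icc_eq_empty (by omega)]; simp
  | succ k ih =>
    rcases le_or_gt N (k+1) with h | h
    · have hins : Finset.Icc N (k+1) = insert (k+1) (Finset.Icc N k) :=
        (Finset.insert_Icc_right_eq_Icc_add_one h).symm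
      have hnot : (k+1) ∉ Finset.Icc N k := by simp
      rw [hins, Finset.sum_insert hnot, Finset.prod_insert hnot]
      have h2 : ∀ i ∈ Finset.Icc N k,
          x i * ∏ j ∈ Finset.Icc (i+1) (k+1), (1 - x j)
            = (1 - x (k+1)) * (x i * ∏ j ∈ Finset.Icc (i+1) k, (1 - x j)) := by
        intro i hi
        have hik : i ≤ k := (Finset.mem_Icc.1 hi).2
        have h3 : Finset.Icc (i+1) (k+1) = insert (k+1) (Finset.Icc (i+1) k) :=
          (Finset.insert_Icc_right_eq_Icc_add_one (by omega)).symm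
        rw [h3, Finset.prod_insert (by simp)]
        ring
      rw [Finset.sum_congr rfl h2, ← Finset.mul_sum, ih]
      have h4 : Finset.Icc (k+1+1) (k+1) = (∅ : Finset ℕ) := Finset.Icc_eq_empty (by omega)
      rw [h4]
      simp
      ring
    · rw [Finset.Icc_eq_empty (show ¬ N ≤ k+1 by omega)]
      rw [Finset.Icc_eq_empty (show ¬ N ≤ k by omega)] at ih
      simp


/-- slow-drift convolution lemma: if a_kλ_k ∈ (0,1), ∑ a_kλ_k = ∞ and
b_k = o(a_kλ_k) with b_k ≥ 0, then ∑_{i=0}^k b_i ∏_{j=i+1}^k (1 - a_jλ_j) → 0. -/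
theorem stmt9 (a lam b : ℕ → ℝ)
    (hal : ∀ k, a k * lam k ∈ Set.Ioo (0:ℝ) 1)
    (hdiv : Tendsto (fun n => ∑ i ∈ Finset.range n, a i * lam i) atTop atTop)
    (hb : ∀ k, 0 ≤ b k)
    (hsmall : b =o[atTop] fun k => a k * lam k) :
    Tendsto (fun k => ∑ i ∈ Finset.range (k + 1),
        b i * ∏ j ∈ Finset.Icc (i + 1) k, (1 - a j * lam j)) atTop (nhds 0) := by
  set x : ℕ → ℝ := fun k => a k * lam k with hxdef
  have hx0 : ∀ k, 0 < x k := fun k => (hal k).1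
  have hx1 : ∀ k, x k < 1 := fun k => (hal k).2
  have hp0 : ∀ i k, 0 ≤ ∏ j ∈ Finset.Icc i k, (1 - x j) := by
    intro i k
    exact Finset.prod_nonneg fun j _ => by linarith [hx1 j]
  rw [NormedAddCommGroup.tendsto_nhds_zero]
  intro ε hε
  obtain ⟨N, hN⟩ := Filter.eventually_atTop.1 (hsmall.def (by positivity : (0:ℝ) < ε/2))
  have hN' : ∀ i, N ≤ i → b i ≤ ε/2 * x i := by
    intro i hi
    have := hN i hi
    rwa [Real.norm_of_nonneg (hb i), Real.norm_of_nonneg (hx0 i).le] at this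
  set C : ℝ := ∑ i ∈ Finset.range N, b i with hC
  set Q : ℕ → ℝ := fun k => ∏ j ∈ Finset.Icc N k, (1 - x j) with hQdef
  have hQ0 : ∀ k, 0 ≤ Q k := fun k => hp0 N k
  -- Q tends to 0
  have hQtendsto : Tendsto Q atTop (nhds 0) := by
    have hbd : ∀ k, Q k ≤ Real.exp (-(∑ j ∈ Finset.Icc N k, x j)) := by
      intro k
      calc Q k ≤ ∏ j ∈ Finset.Icc N k, Real.exp (-x j) :=
            Finset.prod_le_prod (fun j _ => by linarith [hx1 j])
              (fun j _ => by linarith [Real.add_one_le_exp (-x j)])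
        _ = Real.exp (-(∑ j ∈ Finset.Icc N k, x j)) := by
            rw [← Real.exp_sum]
            congr 1
            rw [← Finset.sum_neg_distrib]
    have hsum : Tendsto (fun k => ∑ j ∈ Finset.Icc N k, x j) atTop atTop := by
      have heq : (fun k => ∑ j ∈ Finset.range (k+1), x j - ∑ j ∈ Finset.range N, x j)
          =ᶠ[atTop] (fun k => ∑ j ∈ Finset.Icc N k, x j) := by
        filter_upwards [Filter.eventually_ge_atTop N] with k hk
        have h1 := Finset.sum_Ico_consecutive x (Nat.zero_le N) (by omega : N ≤ k+1)
        rw [← Finset.range_eq_Ico, ← Finset.range_eq_Ico] at h1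
        rw [← Finset.Ico_add_one_right_eq_Icc]
        linarith
      exact (tendsto_atTop_add_const_right _ _
        (hdiv.comp (tendsto_add_atTop_nat 1))).congr' heq
    have hexp : Tendsto (fun k => Real.exp (-(∑ j ∈ Finset.Icc N k, x j))) atTop (nhds 0) :=
      Real.tendsto_exp_atBot.comp (tendsto_neg_atTop_atBot.comp hsum)
    exact squeeze_zero hQ0 hbd hexp
  have hCQ : Tendsto (fun k => C * Q k) atTop (nhds 0) := by
    simpa using hQtendsto.const_mul C
  have hev : ∀ᶠ k in atTop, C * Q k < ε / 2 :=
    hCQ.eventually_lt_const (by positivity)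
  filter_upwards [hev, Filter.eventually_ge_atTop N] with k hk1 hk2
  set S : ℝ := ∑ i ∈ Finset.range (k + 1), b i * ∏ j ∈ Finset.Icc (i + 1) k, (1 - x j)
    with hS
  have hS0 : 0 ≤ S := Finset.sum_nonneg fun i _ => mul_nonneg (hb i) (hp0 (i+1) k)
  rw [Real.norm_of_nonneg hS0]
  have hsplit : S = ∑ i ∈ Finset.range N, b i * ∏ j ∈ Finset.Icc (i + 1) k, (1 - x j)
      + ∑ i ∈ Finset.Icc N k, b i * ∏ j ∈ Finset.Icc (i + 1) k, (1 - x j) := by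
    rw [hS, Finset.range_eq_Ico,
      ← Finset.sum_Ico_consecutive _ (Nat.zero_le N) (by omega : N ≤ k+1),
      Finset.Ico_add_one_right_eq_Icc, ← Finset.range_eq_Ico]
  have hpart1 : ∑ i ∈ Finset.range N, b i * ∏ j ∈ Finset.Icc (i + 1) k, (1 - x j)
      ≤ C * Q k := by
    rw [hC, Finset.sum_mul]
    apply Finset.sum_le_sum
    intro i hi
    have hiN : i < N := Finset.mem_range.1 hi
    have hsub : Finset.Icc N k ⊆ Finset.Icc (i+1) k := Finset.Icc_subset_Icc (by omega) le_rfl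
    have hsd := Finset.prod_sdiff (f := fun j => (1 - x j)) hsub
    have hD : ∏ j ∈ Finset.Icc (i+1) k \ Finset.Icc N k, (1 - x j) ≤ 1 :=
      Finset.prod_le_one (fun j _ => by linarith [hx1 j]) (fun j _ => by linarith [hx0 j])
    have hD0 : 0 ≤ ∏ j ∈ Finset.Icc (i+1) k \ Finset.Icc N k, (1 - x j) :=
      Finset.prod_nonneg (fun j _ => by linarith [hx1 j])
    calc b i * ∏ j ∈ Finset.Icc (i + 1) k, (1 - x j)
        = b i * ((∏ j ∈ Finset.Icc (i+1) k \ Finset.Icc N k, (1 - x j)) * Q k) := by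
          rw [hsd]
      _ ≤ b i * (1 * Q k) := by
          apply mul_le_mul_of_nonneg_left _ (hb i)
          exact mul_le_mul_of_nonneg_right hD (hQ0 k)
      _ = b i * Q k := by ring
  have hpart2 : ∑ i ∈ Finset.Icc N k, b i * ∏ j ∈ Finset.Icc (i + 1) k, (1 - x j)
      ≤ ε / 2 := by
    have h1 : ∑ i ∈ Finset.Icc N k, b i * ∏ j ∈ Finset.Icc (i + 1) k, (1 - x j)
        ≤ ∑ i ∈ Finset.Icc N k, (ε/2) * (x i * ∏ j ∈ Finset.Icc (i + 1) k, (1 - x j)) := by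
      apply Finset.sum_le_sum
      intro i hi
      have hNi : N ≤ i := (Finset.mem_Icc.1 hi).1
      calc b i * ∏ j ∈ Finset.Icc (i + 1) k, (1 - x j)
          ≤ (ε/2 * x i) * ∏ j ∈ Finset.Icc (i + 1) k, (1 - x j) :=
            mul_le_mul_of_nonneg_right (hN' i hNi) (hp0 (i+1) k)
        _ = (ε/2) * (x i * ∏ j ∈ Finset.Icc (i + 1) k, (1 - x j)) := by ring
    rw [← Finset.mul_sum, tel9 x N k] at h1
    have h2 : (ε/2) * (1 - Q k) ≤ ε/2 := by
      have := hQ0 k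
      nlinarith
    linarith
  linarith [hsplit ▸ (add_le_add hpart1 hpart2)]
end

section
/- Let H be a Hilbert space, T₁ and T₂ positive semidefinite self-adjoint bounded operators, λ₁, λ₂ > 0, and f* ∈ H. Define f_i = (T_i + λ_i I)^{-1} T_i f* for i = 1, 2. Then ‖f₂ - f₁‖ ≤ (‖T₂ - T₁‖/λ₁ + |λ₁ - λ₂|/λ₁) · ‖f₁ - f*‖, provided T₂ + λ₂ I is invertible with ‖(T₂ + λ₂ I)^{-1}‖ ≤ 1/λ₂ and ‖(T₂ + λ₂ I)^{-1} T₂‖ ≤ 1. -/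
open scoped RealInnerProductSpace

/-- drift bound for Tikhonov regularization paths:
‖f₂ - f₁‖ ≤ (‖T₂-T₁‖/λ₁ + |λ₁-λ₂|/λ₁)‖f₁ - f*‖. -/
theorem stmt13 {H : Type*} [NormedAddCommGroup H] [InnerProductSpace ℝ H] [CompleteSpace H]
    (T1 T2 : H →L[ℝ] H) (hsa1 : IsSelfAdjoint T1) (hsa2 : IsSelfAdjoint T2)
    (hpos1 : ∀ f : H, 0 ≤ ⟪T1 f, f⟫) (hpos2 : ∀ f : H, 0 ≤ ⟪T2 f, f⟫)
    (l1 l2 : ℝ) (hl1 : 0 < l1) (hl2 : 0 < l2)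
    (fstar f1 f2 : H)
    (hf1 : (T1 + l1 • ContinuousLinearMap.id ℝ H) f1 = T1 fstar)
    (S : H →L[ℝ] H)
    (hS1 : ∀ f, S ((T2 + l2 • ContinuousLinearMap.id ℝ H) f) = f)
    (hS2 : ∀ f, (T2 + l2 • ContinuousLinearMap.id ℝ H) (S f) = f)
    (hSn : ‖S‖ ≤ 1 / l2) (hSTn : ‖S.comp T2‖ ≤ 1)
    (hf2 : f2 = S (T2 fstar)) :
    ‖f2 - f1‖ ≤ (‖T2 - T1‖ / l1 + |l1 - l2| / l1) * ‖f1 - fstar‖ := by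
  set g := fstar - f1 with hg
  have hl1f1 : l1 • f1 = T1 g := by
    simp only [ContinuousLinearMap.add_apply, ContinuousLinearMap.smul_apply,
      ContinuousLinearMap.id_apply] at hf1
    rw [hg, map_sub]
    linear_combination (norm := module) hf1
  have hl2f1 : l2 • f1 = (l2 / l1) • T1 g := by
    rw [← hl1f1, smul_smul, div_mul_cancel₀ _ hl1.ne']
  have harg : T2 fstar - (T2 + l2 • ContinuousLinearMap.id ℝ H) f1
      = (1 - l2 / l1) • T2 g + (l2 / l1) • ((T2 - T1) g) := by
    simp only [ContinuousLinearMap.add_apply, ContinuousLinearMap.smul_apply,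
      ContinuousLinearMap.id_apply, ContinuousLinearMap.sub_apply]
    rw [hl2f1]
    have : T2 fstar - T2 f1 = T2 g := by rw [hg, map_sub]
    linear_combination (norm := module) this
  have key : f2 - f1 = (1 - l2 / l1) • S (T2 g) + (l2 / l1) • S ((T2 - T1) g) := by
    have h1 : f1 = S ((T2 + l2 • ContinuousLinearMap.id ℝ H) f1) := (hS1 f1).symm
    rw [hf2, h1, ← map_sub, harg, map_add, map_smul, map_smul]
  have hb1 : ‖S (T2 g)‖ ≤ ‖g‖ := by
    calc ‖S (T2 g)‖ = ‖(S.comp T2) g‖ := rfl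
      _ ≤ ‖S.comp T2‖ * ‖g‖ := (S.comp T2).le_opNorm g
      _ ≤ 1 * ‖g‖ := by gcongr
      _ = ‖g‖ := one_mul _
  have hb2 : ‖S ((T2 - T1) g)‖ ≤ (1 / l2) * (‖T2 - T1‖ * ‖g‖) := by
    calc ‖S ((T2 - T1) g)‖ ≤ ‖S‖ * ‖(T2 - T1) g‖ := S.le_opNorm _
      _ ≤ (1 / l2) * (‖T2 - T1‖ * ‖g‖) := by
          gcongr
          exact (T2 - T1).le_opNorm g
  have habs : |1 - l2 / l1| = |l1 - l2| / l1 := by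
    have h : 1 - l2 / l1 = (l1 - l2) / l1 := by field_simp
    rw [h, abs_div, abs_of_pos hl1]
  have hng : ‖g‖ = ‖f1 - fstar‖ := norm_sub_rev _ _
  calc ‖f2 - f1‖ ≤ ‖(1 - l2 / l1) • S (T2 g)‖ + ‖(l2 / l1) • S ((T2 - T1) g)‖ := by
        rw [key]; exact norm_add_le _ _
    _ = |1 - l2 / l1| * ‖S (T2 g)‖ + |l2 / l1| * ‖S ((T2 - T1) g)‖ := by
        rw [norm_smul, norm_smul, Real.norm_eq_abs, Real.norm_eq_abs]
    _ ≤ |1 - l2 / l1| * ‖g‖ + |l2 / l1| * ((1 / l2) * (‖T2 - T1‖ * ‖g‖)) := by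
        gcongr
    _ = (‖T2 - T1‖ / l1 + |l1 - l2| / l1) * ‖f1 - fstar‖ := by
        rw [habs, abs_of_pos (div_pos hl2 hl1), hng]
        field_simp
        ring
end
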